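/- arXiv:math/0609125 — 10 statements merged into one kernel-verified Lean document; each statement's English description precedes it below -/
import Mathlib

section
/- Let K be a field and X a type, and let Mag(X) be the free nonunital nonassociative K-algebra on X. There exists a unique K-linear map δ : Mag(X) → Mag(X) ⊗ Mag(X) such that δ(ι x) = 0 for every generator x ∈ X, and such that δ satisfies the reduced unital-infinitesimal compatibility relation: δ(a·b) = (id ⊗ mulRight b)(δ a) + (mulLeft a ⊗ id)(δ b) + a ⊗ b for all a, b ∈ Mag(X). -/
open TensorProduct

/-- A K-linear map `δ : A → A ⊗ A` satisfies the reduced unital-infinitesimal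
compatibility relation if
`δ(a·b) = (id ⊗ mulRight b)(δ a) + (mulLeft a ⊗ id)(δ b) + a ⊗ b` for all `a b`. -/
def IsUICoproduct (K : Type*) [Field K] (A : Type*) [NonUnitalNonAssocRing A]
    [Module K A] [SMulCommClass K A A] [IsScalarTower K A A]
    (δ : A →ₗ[K] A ⊗[K] A) : Prop :=
  ∀ a b : A,
    δ (a * b) =
      TensorProduct.map LinearMap.id (LinearMap.mulRight K b) (δ a) +
      TensorProduct.map (LinearMap.mulLeft K a) LinearMap.id (δ b) +
      a ⊗ₜ[K] b

noncomputable section UIAux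
variable (K : Type*) [Field K] (X : Type*)

local notation "Mag" => FreeNonUnitalNonAssocAlgebra K X

def uiE (m : FreeMagma X) : Mag := MonoidAlgebra.single m 1

lemma uiE_mul (m n : FreeMagma X) : uiE K X (m * n) = uiE K X m * uiE K X n := by
  simp [uiE, MonoidAlgebra.single_mul_single]

def uiAux : FreeMagma X → (Mag ⊗[K] Mag)
  | FreeMagma.of _ => 0
  | FreeMagma.mul a b =>
      TensorProduct.map LinearMap.id (LinearMap.mulRight K (uiE K X b)) (uiAux a)
      + TensorProduct.map (LinearMap.mulLeft K (uiE K X a)) LinearMap.id (uiAux b)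
      + uiE K X a ⊗ₜ[K] uiE K X b

def uiD : Mag →ₗ[K] Mag ⊗[K] Mag :=
  (Finsupp.lift _ K _ (uiAux K X)).comp (MonoidAlgebra.coeffLinearEquiv K).toLinearMap

lemma uiD_single (m : FreeMagma X) (k : K) :
    uiD K X (MonoidAlgebra.single m k) = k • uiAux K X m := by
  rw [uiD]; simp [Finsupp.lift_apply]

lemma ui_lhom_ext {N : Type*} [AddCommMonoid N] [Module K N] {f g : Mag →ₗ[K] N}
    (h : ∀ m k, f (MonoidAlgebra.single m k) = g (MonoidAlgebra.single m k)) : f = g :=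
  MonoidAlgebra.lhom_ext' fun m => LinearMap.ext fun k => by
    simpa [MonoidAlgebra.lsingle_apply] using h m k

lemma uiD_uiE (m : FreeMagma X) : uiD K X (uiE K X m) = uiAux K X m := by
  rw [show uiE K X m = MonoidAlgebra.single m 1 from rfl, uiD_single, one_smul]

lemma ui_mulLeft_add (A : Type*) [NonUnitalNonAssocRing A] [Module K A] [SMulCommClass K A A]
    (a a' : A) : LinearMap.mulLeft K (a + a') = LinearMap.mulLeft K a + LinearMap.mulLeft K a' :=
  LinearMap.ext fun x => add_mul a a' x

lemma ui_mulLeft_smul (A : Type*) [NonUnitalNonAssocRing A] [Module K A] [SMulCommClass K A A]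
    [IsScalarTower K A A] (k : K) (a : A) :
    LinearMap.mulLeft K (k • a) = k • LinearMap.mulLeft K a :=
  LinearMap.ext fun x => smul_mul_assoc k a x

lemma ui_mulRight_add (A : Type*) [NonUnitalNonAssocRing A] [Module K A] [IsScalarTower K A A]
    (b b' : A) : LinearMap.mulRight K (b + b') = LinearMap.mulRight K b + LinearMap.mulRight K b' :=
  LinearMap.ext fun x => mul_add x b b'

lemma ui_mulRight_smul (A : Type*) [NonUnitalNonAssocRing A] [Module K A] [SMulCommClass K A A]
    [IsScalarTower K A A] (k : K) (b : A) :
    LinearMap.mulRight K (k • b) = k • LinearMap.mulRight K b :=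
  LinearMap.ext fun x => mul_smul_comm k x b

/-- right-hand side of the compatibility relation as a bilinear map -/
def uiRHS : Mag →ₗ[K] Mag →ₗ[K] Mag ⊗[K] Mag :=
  LinearMap.mk₂ K
    (fun a b => TensorProduct.map LinearMap.id (LinearMap.mulRight K b) (uiD K X a)
      + TensorProduct.map (LinearMap.mulLeft K a) LinearMap.id (uiD K X b)
      + a ⊗ₜ[K] b)
    (fun a a' b => by
      rw [map_add, map_add, ui_mulLeft_add, TensorProduct.map_add_left, add_tmul]
      simp only [LinearMap.add_apply]; abel)
    (fun k a b => by
      rw [map_smul, ui_mulLeft_smul, TensorProduct.map_smul_left]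
      simp only [LinearMap.smul_apply, map_smul, smul_add, smul_tmul'])
    (fun a b b' => by
      rw [map_add, ui_mulRight_add, TensorProduct.map_add_right, map_add, tmul_add]
      simp only [LinearMap.add_apply]; abel)
    (fun k a b => by
      rw [map_smul, ui_mulRight_smul, TensorProduct.map_smul_right, tmul_smul]
      simp only [LinearMap.smul_apply, map_smul, smul_add])

lemma uiRHS_apply (a b : Mag) :
    uiRHS K X a b = TensorProduct.map LinearMap.id (LinearMap.mulRight K b) (uiD K X a)
      + TensorProduct.map (LinearMap.mulLeft K a) LinearMap.id (uiD K X b)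
      + a ⊗ₜ[K] b := rfl

lemma uiRHS_uiE (m n : FreeMagma X) :
    uiRHS K X (uiE K X m) (uiE K X n) = uiAux K X (m * n) := by
  rw [uiRHS_apply]
  show _ = TensorProduct.map LinearMap.id (LinearMap.mulRight K (uiE K X n)) (uiAux K X m)
      + TensorProduct.map (LinearMap.mulLeft K (uiE K X m)) LinearMap.id (uiAux K X n)
      + uiE K X m ⊗ₜ[K] uiE K X n
  exact congrArg₂ (· + ·)
    (congrArg₂ (· + ·) (congrArg _ (uiD_uiE K X m)) (congrArg _ (uiD_uiE K X n))) rfl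

lemma uiD_compat : IsUICoproduct K Mag (uiD K X) := by
  have h : (LinearMap.mul K Mag).compr₂ (uiD K X) = uiRHS K X := by
    apply ui_lhom_ext K X; intro m k
    apply ui_lhom_ext K X; intro n l
    have hm : (MonoidAlgebra.single m k : Mag) = k • uiE K X m := by
      rw [uiE, MonoidAlgebra.smul_single', mul_one]
    have hn : (MonoidAlgebra.single n l : Mag) = l • uiE K X n := by
      rw [uiE, MonoidAlgebra.smul_single', mul_one]
    have hval : uiRHS K X (MonoidAlgebra.single m k) (MonoidAlgebra.single n l)
        = (k * l) • uiAux K X (m * n) := by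
      rw [hm, hn, map_smul (uiRHS K X), LinearMap.smul_apply, map_smul, smul_smul, uiRHS_uiE]
    have hlhs : uiD K X ((MonoidAlgebra.single m k : Mag) * MonoidAlgebra.single n l)
        = (k * l) • uiAux K X (m * n) := by
      rw [MonoidAlgebra.single_mul_single, uiD_single]
    show uiD K X ((MonoidAlgebra.single m k : Mag) * MonoidAlgebra.single n l)
      = uiRHS K X (MonoidAlgebra.single m k) (MonoidAlgebra.single n l)
    exact hlhs.trans hval.symm
  intro a b
  exact LinearMap.congr_fun (LinearMap.congr_fun h a) b

lemma uiD_of (x : X) : uiD K X (FreeNonUnitalNonAssocAlgebra.of K x) = 0 := by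
  show uiD K X (MonoidAlgebra.single (FreeMagma.of x) 1) = 0
  rw [uiD_single]; simp [uiAux]

end UIAux

/-- On the free nonunital nonassociative algebra `Mag(X)` there is a unique linear map
`δ` vanishing on the generators and satisfying the reduced unital-infinitesimal
compatibility relation. -/
theorem exists_unique_ui_coproduct_freeNonUnitalNonAssocAlgebra
    (K : Type*) [Field K] (X : Type*) :
    ∃! δ : FreeNonUnitalNonAssocAlgebra K X →ₗ[K]
        (FreeNonUnitalNonAssocAlgebra K X) ⊗[K] (FreeNonUnitalNonAssocAlgebra K X),
      (∀ x : X, δ (FreeNonUnitalNonAssocAlgebra.of K x) = 0) ∧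
      IsUICoproduct K (FreeNonUnitalNonAssocAlgebra K X) δ := by
  refine ⟨uiD K X, ⟨uiD_of K X, uiD_compat K X⟩, ?_⟩
  rintro δ' ⟨h0, hc⟩
  have key : ∀ m : FreeMagma X, δ' (uiE K X m) = uiD K X (uiE K X m) := by
    intro m
    induction m using FreeMagma.recOnMul with
    | ih1 x =>
        have : uiE K X (FreeMagma.of x) = FreeNonUnitalNonAssocAlgebra.of K x := rfl
        rw [this, h0, uiD_of]
    | ih2 a b ha hb =>
        rw [uiE_mul]
        calc δ' (uiE K X a * uiE K X b)
            = TensorProduct.map LinearMap.id (LinearMap.mulRight K (uiE K X b)) (δ' (uiE K X a))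
              + TensorProduct.map (LinearMap.mulLeft K (uiE K X a)) LinearMap.id (δ' (uiE K X b))
              + uiE K X a ⊗ₜ[K] uiE K X b := hc _ _
          _ = TensorProduct.map LinearMap.id (LinearMap.mulRight K (uiE K X b))
                (uiD K X (uiE K X a))
              + TensorProduct.map (LinearMap.mulLeft K (uiE K X a)) LinearMap.id
                (uiD K X (uiE K X b))
              + uiE K X a ⊗ₜ[K] uiE K X b :=
            congrArg₂ (· + ·) (congrArg₂ (· + ·) (congrArg _ ha) (congrArg _ hb)) rfl
          _ = uiD K X (uiE K X a * uiE K X b) := (uiD_compat K X _ _).symm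
  apply ui_lhom_ext K X; intro m k
  have hm : (MonoidAlgebra.single m k : FreeNonUnitalNonAssocAlgebra K X) = k • uiE K X m := by
    rw [uiE, MonoidAlgebra.smul_single', mul_one]
  rw [hm, map_smul, map_smul]
  exact congrArg (k • ·) (key m)
end

section
/- Let K be a field and X a type, and let Mag(X) be the free nonunital nonassociative K-algebra on X. If δ : Mag(X) → Mag(X) ⊗ Mag(X) is a K-linear map with δ(ι x) = 0 for every generator x ∈ X which satisfies the reduced unital-infinitesimal compatibility relation, then δ is coassociative: (δ ⊗ id) ∘ δ = (id ⊗ δ) ∘ δ after identifying (Mag(X) ⊗ Mag(X)) ⊗ Mag(X) with Mag(X) ⊗ (Mag(X) ⊗ Mag(X)) via the tensor associator. -/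
open TensorProduct

section Aux

variable {K : Type*} [Field K] {A : Type*} [NonUnitalNonAssocRing A]
    [Module K A] [SMulCommClass K A A] [IsScalarTower K A A]

/-- `v ⊗ (x ⊗ y) ↦ (v*x) ⊗ y`. -/
noncomputable def uiG (K A : Type*) [Field K] [NonUnitalNonAssocRing A]
    [Module K A] [SMulCommClass K A A] [IsScalarTower K A A] :
    A ⊗[K] (A ⊗[K] A) →ₗ[K] A ⊗[K] A :=
  (TensorProduct.map (LinearMap.mul' K A) LinearMap.id) ∘ₗ
    ((TensorProduct.assoc K A A A).symm : A ⊗[K] (A ⊗[K] A) ≃ₗ[K] (A ⊗[K] A) ⊗[K] A).toLinearMap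

lemma uiG_tmul (v : A) (s : A ⊗[K] A) :
    uiG K A (v ⊗ₜ s) = TensorProduct.map (LinearMap.mulLeft K v) LinearMap.id s := by
  induction s using TensorProduct.induction_on with
  | zero => simp
  | tmul x y => simp [uiG]
  | add s₁ s₂ h₁ h₂ => simp only [tmul_add, map_add, h₁, h₂]

/-- the cross term `Σ u₁ ⊗ ((u₂ * v) ⊗ w)` for `t = Σ u₁ ⊗ u₂`, `s = Σ v ⊗ w`. -/
noncomputable def uiCT (t s : A ⊗[K] A) : A ⊗[K] (A ⊗[K] A) :=
  LinearMap.lTensor A (uiG K A) ((TensorProduct.assoc K A A (A ⊗[K] A)) (t ⊗ₜ s))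

lemma uiCT_tmul_left (u v : A) (s : A ⊗[K] A) :
    uiCT (u ⊗ₜ v) s = u ⊗ₜ (TensorProduct.map (LinearMap.mulLeft K v) LinearMap.id s) := by
  simp [uiCT, uiG_tmul]

lemma uiCT_add_right (t s₁ s₂ : A ⊗[K] A) :
    uiCT t (s₁ + s₂) = uiCT t s₁ + uiCT t s₂ := by
  simp [uiCT, tmul_add]

lemma uiCT_zero_right (t : A ⊗[K] A) : uiCT t (0 : A ⊗[K] A) = 0 := by
  simp [uiCT]

lemma uiAux1 (b : A) (s : A ⊗[K] A) (v : A) :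
    (TensorProduct.assoc K A A A) (s ⊗ₜ (v * b)) =
      TensorProduct.map LinearMap.id (TensorProduct.map LinearMap.id (LinearMap.mulRight K b))
        ((TensorProduct.assoc K A A A) (s ⊗ₜ v)) := by
  induction s using TensorProduct.induction_on with
  | zero => simp
  | tmul x y => simp
  | add s₁ s₂ h₁ h₂ => simp only [add_tmul, map_add, h₁, h₂]

lemma uiAux2 (a : A) (s : A ⊗[K] A) (w : A) :
    (TensorProduct.assoc K A A A)
        ((TensorProduct.map (LinearMap.mulLeft K a) LinearMap.id s) ⊗ₜ w) =
      TensorProduct.map (LinearMap.mulLeft K a) LinearMap.id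
        ((TensorProduct.assoc K A A A) (s ⊗ₜ w)) := by
  induction s using TensorProduct.induction_on with
  | zero => simp
  | tmul x y => simp
  | add s₁ s₂ h₁ h₂ => simp only [map_add, add_tmul, h₁, h₂]

lemma uiAux3 (s : A ⊗[K] A) (w : A) :
    (TensorProduct.assoc K A A A) (s ⊗ₜ w) =
      LinearMap.lTensor A ((TensorProduct.mk K A A).flip w) s := by
  induction s using TensorProduct.induction_on with
  | zero => simp
  | tmul x y => simp
  | add s₁ s₂ h₁ h₂ => simp only [add_tmul, map_add, h₁, h₂]

lemma uiAux4 (s : A ⊗[K] A) (v w : A) :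
    (TensorProduct.assoc K A A A)
        ((TensorProduct.map LinearMap.id (LinearMap.mulRight K v) s) ⊗ₜ w) =
      uiCT s (v ⊗ₜ w) := by
  induction s using TensorProduct.induction_on with
  | zero => simp [uiCT]
  | tmul x y => simp [uiCT_tmul_left]
  | add s₁ s₂ h₁ h₂ =>
      simp only [map_add, add_tmul, h₁, h₂, uiCT, LinearEquiv.map_add]

variable (δ : A →ₗ[K] A ⊗[K] A) (hui : IsUICoproduct K A δ)
include hui

omit hui in
lemma uiE1 (b : A) (t : A ⊗[K] A) :
    (TensorProduct.assoc K A A A)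
        (TensorProduct.map δ LinearMap.id (TensorProduct.map LinearMap.id (LinearMap.mulRight K b) t)) =
      TensorProduct.map LinearMap.id (TensorProduct.map LinearMap.id (LinearMap.mulRight K b))
        ((TensorProduct.assoc K A A A) (TensorProduct.map δ LinearMap.id t)) := by
  induction t using TensorProduct.induction_on with
  | zero => simp
  | tmul u v =>
      simp only [map_tmul, LinearMap.id_coe, id_eq, LinearMap.mulRight_apply]
      exact uiAux1 b (δ u) v
  | add t₁ t₂ h₁ h₂ => simp only [map_add, LinearEquiv.map_add, h₁, h₂]

lemma uiE2 (b : A) (t : A ⊗[K] A) :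
    TensorProduct.map LinearMap.id δ (TensorProduct.map LinearMap.id (LinearMap.mulRight K b) t) =
      TensorProduct.map LinearMap.id (TensorProduct.map LinearMap.id (LinearMap.mulRight K b))
        (TensorProduct.map LinearMap.id δ t) +
      uiCT t (δ b) +
      LinearMap.lTensor A ((TensorProduct.mk K A A).flip b) t := by
  induction t using TensorProduct.induction_on with
  | zero => simp [uiCT]
  | tmul u v =>
      simp only [map_tmul, LinearMap.id_coe, id_eq, LinearMap.mulRight_apply]
      rw [hui v b, uiCT_tmul_left]
      simp [tmul_add]
  | add t₁ t₂ h₁ h₂ =>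
      simp only [map_add, h₁, h₂, uiCT, add_tmul, LinearEquiv.map_add]
      abel

lemma uiE4 (a : A) (t : A ⊗[K] A) :
    (TensorProduct.assoc K A A A)
        (TensorProduct.map δ LinearMap.id (TensorProduct.map (LinearMap.mulLeft K a) LinearMap.id t)) =
      uiCT (δ a) t +
      TensorProduct.map (LinearMap.mulLeft K a) LinearMap.id
        ((TensorProduct.assoc K A A A) (TensorProduct.map δ LinearMap.id t)) +
      a ⊗ₜ t := by
  induction t using TensorProduct.induction_on with
  | zero => simp [uiCT]
  | tmul v w =>
      simp only [map_tmul, LinearMap.id_coe, id_eq, LinearMap.mulLeft_apply]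
      rw [hui a v]
      rw [add_tmul, add_tmul, LinearEquiv.map_add, LinearEquiv.map_add,
        uiAux4 (δ a) v w, uiAux2 a (δ v) w]
      simp
  | add t₁ t₂ h₁ h₂ =>
      simp only [map_add, LinearEquiv.map_add, h₁, h₂, uiCT_add_right, tmul_add]
      abel

omit hui

lemma uiE5 (a : A) (t : A ⊗[K] A) :
    TensorProduct.map LinearMap.id δ (TensorProduct.map (LinearMap.mulLeft K a) LinearMap.id t) =
      TensorProduct.map (LinearMap.mulLeft K a) LinearMap.id
        (TensorProduct.map LinearMap.id δ t) := by
  induction t using TensorProduct.induction_on with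
  | zero => simp
  | tmul v w => simp
  | add t₁ t₂ h₁ h₂ => simp only [map_add, h₁, h₂]

include hui in
lemma uiStep (a b : A)
    (ha : (TensorProduct.assoc K A A A) (TensorProduct.map δ LinearMap.id (δ a)) =
      TensorProduct.map LinearMap.id δ (δ a))
    (hb : (TensorProduct.assoc K A A A) (TensorProduct.map δ LinearMap.id (δ b)) =
      TensorProduct.map LinearMap.id δ (δ b)) :
    (TensorProduct.assoc K A A A) (TensorProduct.map δ LinearMap.id (δ (a * b))) =
      TensorProduct.map LinearMap.id δ (δ (a * b)) := by
  rw [hui a b]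
  simp only [map_add, LinearEquiv.map_add]
  rw [uiE1 δ b (δ a), uiE4 δ hui a (δ b), uiE2 δ hui b (δ a), uiE5 δ a (δ b),
    ha, hb]
  simp only [map_tmul, LinearMap.id_coe, id_eq]
  rw [uiAux3 (δ a) b]
  abel

end Aux

set_option synthInstance.maxHeartbeats 1000000 in
set_option maxHeartbeats 2000000 in
/-- Any reduced unital-infinitesimal coproduct on the free nonunital nonassociative
algebra `Mag(X)` vanishing on the generators is coassociative. -/
theorem coassoc_of_ui_coproduct_freeNonUnitalNonAssocAlgebra
    (K : Type*) [Field K] (X : Type*)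
    (δ : FreeNonUnitalNonAssocAlgebra K X →ₗ[K]
        (FreeNonUnitalNonAssocAlgebra K X) ⊗[K] (FreeNonUnitalNonAssocAlgebra K X))
    (hgen : ∀ x : X, δ (FreeNonUnitalNonAssocAlgebra.of K x) = 0)
    (hui : IsUICoproduct K (FreeNonUnitalNonAssocAlgebra K X) δ) :
    ∀ a : FreeNonUnitalNonAssocAlgebra K X,
      (TensorProduct.assoc K (FreeNonUnitalNonAssocAlgebra K X)
          (FreeNonUnitalNonAssocAlgebra K X) (FreeNonUnitalNonAssocAlgebra K X))
        (TensorProduct.map δ LinearMap.id (δ a)) =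
      TensorProduct.map LinearMap.id δ (δ a) := by
  let P : FreeNonUnitalNonAssocAlgebra K X → Prop := fun a =>
    (TensorProduct.assoc K (FreeNonUnitalNonAssocAlgebra K X) (FreeNonUnitalNonAssocAlgebra K X)
        (FreeNonUnitalNonAssocAlgebra K X)) (TensorProduct.map δ LinearMap.id (δ a)) =
      TensorProduct.map LinearMap.id δ (δ a)
  have hP0 : P 0 := by simp [P]
  have hPadd : ∀ a b, P a → P b → P (a + b) := by
    intro a b ha hb
    simp only [P, map_add, LinearEquiv.map_add] at *
    rw [ha, hb]
  have hPsmul : ∀ (c : K) a, P a → P (c • a) := by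
    intro c a ha
    simp only [P, map_smul, LinearEquiv.map_smul] at *
    rw [ha]
  have hPmul : ∀ a b, P a → P b → P (a * b) := fun a b ha hb => uiStep δ hui a b ha hb
  have key : ∀ m : FreeMagma X, P (MonoidAlgebra.single m (1 : K)) := by
    intro m
    induction m using FreeMagma.recOnMul with
    | ih1 x =>
        have h : MonoidAlgebra.single (FreeMagma.of x) (1 : K) =
            FreeNonUnitalNonAssocAlgebra.of K x := rfl
        rw [h]
        simp [P, hgen x]
    | ih2 m n hm hn =>
        have h : MonoidAlgebra.single (m * n) (1 : K) =
            MonoidAlgebra.single m (1 : K) * MonoidAlgebra.single n (1 : K) := by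
          rw [MonoidAlgebra.single_mul_single, one_mul]
        rw [h]
        exact hPmul _ _ hm hn
  intro a
  show P a
  induction a using MonoidAlgebra.induction_linear with
  | zero => exact hP0
  | add f g hf hg => exact hPadd f g hf hg
  | single m c =>
      have h : (MonoidAlgebra.single m c : MonoidAlgebra K (FreeMagma X)) =
          c • MonoidAlgebra.single m (1 : K) := by
        rw [MonoidAlgebra.smul_single', mul_one]
      rw [h]
      exact hPsmul c _ (key m)
end

section
/- Let K be a field, X a type, Mag(X) the free nonunital nonassociative K-algebra on X, and let δ : Mag(X) → Mag(X) ⊗ Mag(X) be a K-linear map with δ(ι x) = 0 for all x ∈ X satisfying the reduced unital-infinitesimal compatibility relation. Then for every element w of the free magma on X with r leaves (r ≥ 1), the coproduct of its image w̄ ∈ Mag(X) is given by splitting: δ(w̄) = Σ_{i=1}^{r−1} (w⁽¹⁾ᵢ)‾ ⊗ (w⁽²⁾ᵢ)‾ (an empty sum when r = 1). -/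
open TensorProduct

/-- Splitting of a planar binary tree (element of the free magma) in between
leaves `i` and `i+1`; meaningful for `1 ≤ i ≤ length w - 1` (junk values otherwise). -/
def FreeMagma.split {X : Type*} : FreeMagma X → ℕ → FreeMagma X × FreeMagma X
  | FreeMagma.of x, _ => (FreeMagma.of x, FreeMagma.of x)
  | FreeMagma.mul u v, i =>
    if i < u.length then ((u.split i).1, FreeMagma.mul (u.split i).2 v)
    else if i = u.length then (u, v)
    else (FreeMagma.mul u (v.split (i - u.length)).1, (v.split (i - u.length)).2)

/-- The unital-infinitesimal coproduct on `Mag(X)` which vanishes on generators splits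
(the image of) a tree `w` with `r` leaves along its `r-1` splittings. -/
theorem ui_coproduct_splitting
    (K : Type*) [Field K] (X : Type*)
    (δ : FreeNonUnitalNonAssocAlgebra K X →ₗ[K]
        (FreeNonUnitalNonAssocAlgebra K X) ⊗[K] (FreeNonUnitalNonAssocAlgebra K X))
    (hgen : ∀ x : X, δ (FreeNonUnitalNonAssocAlgebra.of K x) = 0)
    (hui : IsUICoproduct K (FreeNonUnitalNonAssocAlgebra K X) δ)
    (bar : FreeMagma X →ₙ* FreeNonUnitalNonAssocAlgebra K X)
    (hbar : bar = FreeMagma.lift (FreeNonUnitalNonAssocAlgebra.of K)) :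
    ∀ w : FreeMagma X,
      δ (bar w) =
        ∑ i ∈ Finset.Icc 1 (w.length - 1),
          (bar (w.split i).1) ⊗ₜ[K] (bar (w.split i).2) := by
  intro w
  induction w with
  | ih1 x =>
    have : bar (FreeMagma.of x) = FreeNonUnitalNonAssocAlgebra.of K x := by
      rw [hbar]; rfl
    simp [this, hgen, FreeMagma.length]
  | ih2 u v ihu ihv =>
    have hu := u.length_pos
    have hv := v.length_pos
    set a := u.length with ha
    set b := v.length with hb2
    have key : ∑ i ∈ Finset.Icc 1 ((u * v).length - 1),
          (bar ((u * v).split i).1) ⊗ₜ[K] (bar ((u * v).split i).2)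
        = (∑ i ∈ Finset.Icc 1 (a - 1),
            bar (u.split i).1 ⊗ₜ[K] (bar (u.split i).2 * bar v))
          + ((∑ i ∈ Finset.Icc 1 (b - 1),
            (bar u * bar (v.split i).1) ⊗ₜ[K] bar (v.split i).2)
          + bar u ⊗ₜ[K] bar v) := by
      have hlen : (u * v).length = a + b := rfl
      set f : ℕ → _ := fun i => (bar ((u * v).split i).1) ⊗ₜ[K] (bar ((u * v).split i).2)
        with hf
      rw [hlen, show (1 : ℕ) = Nat.succ 0 from rfl,
        show Finset.Icc (Nat.succ 0) (a + b - Nat.succ 0) = Finset.Ioc 0 (a + b - Nat.succ 0)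
          from Finset.Icc_add_one_left_eq_Ioc _ _,
        ← Finset.sum_Ioc_consecutive f (Nat.zero_le a) (by omega : a ≤ a + b - 1)]
      have h1 : ∑ i ∈ Finset.Ioc 0 a, f i
          = ∑ i ∈ Finset.Ioc 0 (a - 1), f i + f a := by
        conv_lhs => rw [show a = (a - 1) + 1 by omega]
        rw [Finset.sum_Ioc_succ_top (Nat.zero_le _), show (a - 1) + 1 = a by omega]
      have h2 : ∑ i ∈ Finset.Ioc a (a + b - 1), f i
          = ∑ j ∈ Finset.Ioc 0 (b - 1), f (a + j) := by
        rw [show a + b - 1 = a + (b - 1) by omega, show (Finset.Ioc a (a + (b-1)))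
          = Finset.Ioc (a + 0) (a + (b-1)) by rw [Nat.add_zero],
          ← Finset.map_add_left_Ioc, Finset.sum_map]
        rfl
      rw [h1, h2]
      have e1 : ∀ i ∈ Finset.Ioc 0 (a - 1), f i =
          bar (u.split i).1 ⊗ₜ[K] (bar (u.split i).2 * bar v) := by
        intro i hi
        simp only [Finset.mem_Ioc] at hi
        have hia : i < a := by omega
        simp only [hf, FreeMagma.split, ← ha, if_pos hia]
        rw [show FreeMagma.mul (u.split i).2 v = (u.split i).2 * v from rfl, map_mul]
      have e2 : f a = bar u ⊗ₜ[K] bar v := by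
        simp [hf, FreeMagma.split, ← ha]
      have e3 : ∀ j ∈ Finset.Ioc 0 (b - 1), f (a + j) =
          (bar u * bar (v.split j).1) ⊗ₜ[K] bar (v.split j).2 := by
        intro j hj
        simp only [Finset.mem_Ioc] at hj
        have h1' : ¬ (a + j < a) := by omega
        have h2' : ¬ (a + j = a) := by omega
        simp only [hf, FreeMagma.split, ← ha, if_neg h1', if_neg h2',
          show a + j - a = j by omega]
        rw [show FreeMagma.mul u (v.split j).1 = u * (v.split j).1 from rfl, map_mul]
      rw [Finset.sum_congr rfl e1, Finset.sum_congr rfl e3, e2]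
      simp only [show ∀ n : ℕ, Finset.Icc (Nat.succ 0) n = Finset.Ioc 0 n
        from fun n => Finset.Icc_add_one_left_eq_Ioc 0 n, show (1:ℕ) = Nat.succ 0 from rfl]
      abel
    rw [key, map_mul, hui (bar u) (bar v),
      ihu, ihv, map_sum, map_sum]
    simp only [TensorProduct.map_tmul, LinearMap.id_coe, id_eq, LinearMap.mulRight_apply,
      LinearMap.mulLeft_apply]
    abel
end

section
/- Let A be a magmatic algebra over a field K with a reduced unital-infinitesimal coproduct δ. If x₁, …, xₙ (n ≥ 2) are primitive elements of A, then δ(ωⁿ(x₁,…,xₙ)) = Σ_{i=1}^{n−1} ωⁱ(x₁,…,xᵢ) ⊗ ω^{n−i}(x_{i+1},…,xₙ). -/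
/-!
Peel off the last factor: for a primitive `x` the compatibility relation reduces to
`δ(ω·x) = (id ⊗ ·x)(δ ω) + ω ⊗ x`, and the deconcatenation sum
`∑ ωⁱ(x₁,…,xᵢ) ⊗ ω^{n-i}(x_{i+1},…,xₙ)` obeys the same recursion in `x₁,…,xₙ,x`
(the new terms `… ⊗ (ω^{n-i} · x)` and `ωⁿ ⊗ x`), so induction on the list closes.
-/

open TensorProduct

/-- The left comb `ωⁿ(x₁,…,xₙ) = ((x₁·x₂)·x₃)⋯·xₙ`, given on the (nonempty) list
of its arguments (junk value `0` on the empty list). -/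
def leftComb {A : Type*} [Mul A] [Zero A] : List A → A
  | [] => 0
  | x :: xs => xs.foldl (· * ·) x

theorem leftComb_append_singleton {A : Type*} [Mul A] [Zero A] {l : List A} (hl : l ≠ [])
    (x : A) : leftComb (l ++ [x]) = leftComb l * x := by
  obtain ⟨y, ys, rfl⟩ := List.exists_cons_of_ne_nil hl
  simp [leftComb, List.foldl_append]

section Deconcat

variable (K : Type*) [CommSemiring K] {A : Type*} [NonUnitalNonAssocSemiring A]
  [Module K A] [IsScalarTower K A A]

/-- `∑_{i=1}^{n-1} ωⁱ(x₁,…,xᵢ) ⊗ ω^{n-i}(x_{i+1},…,xₙ)` for `l = [x₁,…,xₙ]`. -/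
def leftCombDeconcat (l : List A) : A ⊗[K] A :=
  ∑ i ∈ Finset.Icc 1 (l.length - 1), leftComb (l.take i) ⊗ₜ[K] leftComb (l.drop i)

theorem leftCombDeconcat_append_singleton (l : List A) (x : A) :
    leftCombDeconcat K (l ++ [x]) =
      TensorProduct.map LinearMap.id (LinearMap.mulRight K x) (leftCombDeconcat K l) +
        leftComb l ⊗ₜ[K] x := by
  obtain rfl | hl := eq_or_ne l []
  · simp [leftCombDeconcat, leftComb]
  obtain ⟨m, hm⟩ := Nat.exists_eq_add_one_of_ne_zero (mt List.length_eq_zero_iff.mp hl)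
  have hsplit (i : ℕ) (hi : i ∈ Finset.Icc 1 m) :
      leftComb ((l ++ [x]).take i) ⊗ₜ[K] leftComb ((l ++ [x]).drop i) =
        TensorProduct.map LinearMap.id (LinearMap.mulRight K x)
          (leftComb (l.take i) ⊗ₜ[K] leftComb (l.drop i)) := by
    have hi : i < l.length := by simp only [Finset.mem_Icc] at hi; omega
    rw [List.take_append_of_le_length hi.le, List.drop_append_of_le_length hi.le,
      leftComb_append_singleton (by simpa using hi), TensorProduct.map_tmul]
    rfl
  have hlast : leftComb ((l ++ [x]).take (m + 1)) ⊗ₜ[K] leftComb ((l ++ [x]).drop (m + 1)) =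
      leftComb l ⊗ₜ[K] x := by
    rw [List.take_left' hm, List.drop_left' hm]
    rfl
  rw [leftCombDeconcat, leftCombDeconcat, map_sum, List.length_append, hm,
    Nat.add_sub_cancel, List.length_singleton, Nat.add_sub_cancel,
    Finset.sum_Icc_succ_top (by omega), hlast, Finset.sum_congr rfl hsplit]

end Deconcat

section UICoproduct

variable {K : Type*} [Field K] {A : Type*} [NonUnitalNonAssocRing A]
  [Module K A] [SMulCommClass K A A] [IsScalarTower K A A] {δ : A →ₗ[K] A ⊗[K] A}

theorem IsUICoproduct.map_mul_of_map_eq_zero (hui : IsUICoproduct K A δ) (a : A) {b : A}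
    (hb : δ b = 0) :
    δ (a * b) = TensorProduct.map LinearMap.id (LinearMap.mulRight K b) (δ a) + a ⊗ₜ[K] b := by
  rw [hui, hb, map_zero, add_zero]

theorem IsUICoproduct.map_leftComb_append_singleton (hui : IsUICoproduct K A δ) (l : List A)
    {x : A} (hx : δ x = 0) :
    δ (leftComb (l ++ [x])) =
      TensorProduct.map LinearMap.id (LinearMap.mulRight K x) (δ (leftComb l)) +
        leftComb l ⊗ₜ[K] x := by
  obtain rfl | hl := eq_or_ne l []
  · simp [leftComb, hx]
  rw [leftComb_append_singleton hl, hui.map_mul_of_map_eq_zero _ hx]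

theorem IsUICoproduct.map_leftComb (hui : IsUICoproduct K A δ) (l : List A)
    (hprim : ∀ x ∈ l, δ x = 0) : δ (leftComb l) = leftCombDeconcat K l := by
  induction l using List.reverseRecOn with
  | nil => simp [leftComb, leftCombDeconcat]
  | append_singleton l x ih =>
    rw [hui.map_leftComb_append_singleton l (hprim x (by simp)),
      ih fun y hy => hprim y (by simp [hy]), leftCombDeconcat_append_singleton]

end UICoproduct

theorem ui_coproduct_leftComb_of_primitives_general
    (K : Type*) [Field K] (A : Type*) [NonUnitalNonAssocRing A]
    [Module K A] [SMulCommClass K A A] [IsScalarTower K A A]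
    (δ : A →ₗ[K] A ⊗[K] A) (hui : IsUICoproduct K A δ)
    (n : ℕ) (l : List A) (hl : l.length = n)
    (hprim : ∀ x ∈ l, δ x = 0) :
    δ (leftComb l) =
      ∑ i ∈ Finset.Icc 1 (n - 1),
        (leftComb (l.take i)) ⊗ₜ[K] (leftComb (l.drop i)) := by
  subst hl
  exact hui.map_leftComb l hprim

/-- The coproduct of a left comb of primitive elements. -/
theorem ui_coproduct_leftComb_of_primitives
    (K : Type*) [Field K] (A : Type*) [NonUnitalNonAssocRing A]
    [Module K A] [SMulCommClass K A A] [IsScalarTower K A A]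
    (δ : A →ₗ[K] A ⊗[K] A) (hui : IsUICoproduct K A δ)
    (n : ℕ) (hn : 2 ≤ n) (l : List A) (hl : l.length = n)
    (hprim : ∀ x ∈ l, δ x = 0) :
    δ (leftComb l) =
      ∑ i ∈ Finset.Icc 1 (n - 1),
        (leftComb (l.take i)) ⊗ₜ[K] (leftComb (l.drop i)) :=
  ui_coproduct_leftComb_of_primitives_general K A δ hui n l hl hprim
end

section
/- Let A be a magmatic algebra over a field K with a reduced unital-infinitesimal coproduct δ. If x ∈ A is primitive and y, z ∈ A are arbitrary, then δ(as(x,y,z)) = (T ⊗ id)(δ z), where T : A → A is the K-linear map T(w) = as(x,y,w). -/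
/-!
Expand `δ((xy)z)` and `δ(x(yz))` with the compatibility relation, using `δ x = 0`. Since
`mulLeft x ⊗ id` commutes with `id ⊗ mulRight z`, the terms `(mulLeft x ⊗ mulRight z)(δ y)` and
`x ⊗ yz` occur in both expansions and cancel, leaving `(mulLeft (xy) - mulLeft x ∘ mulLeft y) ⊗ id`
applied to `δ z`.
-/

open TensorProduct

open LinearMap

namespace IsUICoproduct

variable {K : Type*} [Field K] {A : Type*} [NonUnitalNonAssocRing A]
  [Module K A] [SMulCommClass K A A] [IsScalarTower K A A]
  {δ : A →ₗ[K] A ⊗[K] A}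

theorem map_mul (hui : IsUICoproduct K A δ) (a b : A) :
    δ (a * b) = (mulRight K b).lTensor A (δ a) + (mulLeft K a).rTensor A (δ b) + a ⊗ₜ b :=
  hui a b

theorem map_mul_of_primitive_left (hui : IsUICoproduct K A δ) {x : A} (hx : δ x = 0) (a : A) :
    δ (x * a) = (mulLeft K x).rTensor A (δ a) + x ⊗ₜ a := by
  rw [hui.map_mul, hx, map_zero, zero_add]

end IsUICoproduct

/-- If `x` is primitive then `δ(as(x,y,z)) = (T ⊗ id)(δ z)` where `T(w) = as(x,y,w)`. -/
theorem ui_coproduct_associator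
    (K : Type*) [Field K] (A : Type*) [NonUnitalNonAssocRing A]
    [Module K A] [SMulCommClass K A A] [IsScalarTower K A A]
    (δ : A →ₗ[K] A ⊗[K] A) (hui : IsUICoproduct K A δ)
    (x y z : A) (hx : δ x = 0)
    (T : A →ₗ[K] A) (hT : ∀ w : A, T w = (x * y) * w - x * (y * w)) :
    δ ((x * y) * z - x * (y * z)) = TensorProduct.map T LinearMap.id (δ z) := by
  have hT' : T = mulLeft K (x * y) - mulLeft K x ∘ₗ mulLeft K y :=
    LinearMap.ext fun w => by simp [hT]
  have hcomm : ∀ u, (mulRight K z).lTensor A ((mulLeft K x).rTensor A u) =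
      (mulLeft K x).rTensor A ((mulRight K z).lTensor A u) := fun u => by
    rw [← comp_apply, ← comp_apply, lTensor_comp_rTensor, rTensor_comp_lTensor]
  change _ = T.rTensor A (δ z)
  rw [map_sub, hui.map_mul, hui.map_mul_of_primitive_left hx, hui.map_mul_of_primitive_left hx,
    hui.map_mul, hT', rTensor_sub, rTensor_comp]
  simp only [map_add, hcomm, lTensor_tmul, rTensor_tmul, mulLeft_apply, mulRight_apply,
    LinearMap.sub_apply, LinearMap.comp_apply]
  abel
end

section
/- Let A be a magmatic algebra over a field K with a reduced unital-infinitesimal coproduct δ. If x, y, z ∈ A are primitive, then the associator as(x,y,z) = (x·y)·z − x·(y·z) is primitive: δ(as(x,y,z)) = 0. -/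
open TensorProduct

namespace IsUICoproduct

variable {K : Type*} [Field K] {A : Type*} [NonUnitalNonAssocRing A]
  [Module K A] [SMulCommClass K A A] [IsScalarTower K A A]
  {δ : A →ₗ[K] A ⊗[K] A}

theorem apply_mul_of_apply_eq_zero (hui : IsUICoproduct K A δ) {a b : A}
    (ha : δ a = 0) (hb : δ b = 0) : δ (a * b) = a ⊗ₜ[K] b := by
  simp [hui a b, ha, hb]

theorem apply_mul_mul_left_of_apply_eq_zero (hui : IsUICoproduct K A δ) {x y z : A}
    (hx : δ x = 0) (hy : δ y = 0) (hz : δ z = 0) :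
    δ ((x * y) * z) = x ⊗ₜ[K] (y * z) + (x * y) ⊗ₜ[K] z := by
  simp [hui (x * y) z, hui.apply_mul_of_apply_eq_zero hx hy, hz]

theorem apply_mul_mul_right_of_apply_eq_zero (hui : IsUICoproduct K A δ) {x y z : A}
    (hx : δ x = 0) (hy : δ y = 0) (hz : δ z = 0) :
    δ (x * (y * z)) = x ⊗ₜ[K] (y * z) + (x * y) ⊗ₜ[K] z := by
  simp [hui x (y * z), hui.apply_mul_of_apply_eq_zero hy hz, hx, add_comm]

end IsUICoproduct

/-- The associator of three primitive elements is primitive. -/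
theorem ui_coproduct_associator_primitive
    (K : Type*) [Field K] (A : Type*) [NonUnitalNonAssocRing A]
    [Module K A] [SMulCommClass K A A] [IsScalarTower K A A]
    (δ : A →ₗ[K] A ⊗[K] A) (hui : IsUICoproduct K A δ)
    (x y z : A) (hx : δ x = 0) (hy : δ y = 0) (hz : δ z = 0) :
    δ ((x * y) * z - x * (y * z)) = 0 := by
  rw [map_sub, hui.apply_mul_mul_left_of_apply_eq_zero hx hy hz,
    hui.apply_mul_mul_right_of_apply_eq_zero hx hy hz, sub_self]
end

section
/- Let A be a magmatic algebra over a field K with a reduced unital-infinitesimal coproduct δ. For every n ≥ 3 and primitive elements x₁, …, xₙ of A, the element μ₁ⁿ(x₁,…,xₙ) := as(x₁, ω^{n−2}(x₂,…,x_{n−1}), xₙ) is primitive: δ(μ₁ⁿ(x₁,…,xₙ)) = 0. -/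
open TensorProduct

/-- The associator `as(x,y,z) = (x·y)·z − x·(y·z)`. -/
def magmaAssociator {A : Type*} [Mul A] [Sub A] (x y z : A) : A :=
  (x * y) * z - x * (y * z)

/-- For `n ≥ 3` and primitive `x₁,…,xₙ`, the element
`μ₁ⁿ(x₁,…,xₙ) = as(x₁, ω^{n-2}(x₂,…,x_{n-1}), xₙ)` is primitive.
Here `x₁ = x`, `xₙ = y` and `l` is the list `x₂,…,x_{n-1}` of the `n-2` middle
arguments. -/
theorem ui_coproduct_mu_one_primitive
    (K : Type*) [Field K] (A : Type*) [NonUnitalNonAssocRing A]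
    [Module K A] [SMulCommClass K A A] [IsScalarTower K A A]
    (δ : A →ₗ[K] A ⊗[K] A) (hui : IsUICoproduct K A δ)
    (n : ℕ) (hn : 3 ≤ n) (x y : A) (l : List A) (hl : l.length = n - 2)
    (hx : δ x = 0) (hy : δ y = 0) (hprim : ∀ a ∈ l, δ a = 0) :
    δ (magmaAssociator x (leftComb l) y) = 0 := by
  set w := leftComb l with hw
  have h1 : δ (x * w) = TensorProduct.map (LinearMap.mulLeft K x) LinearMap.id (δ w)
      + x ⊗ₜ[K] w := by
    rw [hui x w, hx]; simp
  have h2 : δ (w * y) = TensorProduct.map LinearMap.id (LinearMap.mulRight K y) (δ w)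
      + w ⊗ₜ[K] y := by
    rw [hui w y, hy]; simp
  have hcomm : TensorProduct.map LinearMap.id (LinearMap.mulRight K y)
      (TensorProduct.map (LinearMap.mulLeft K x) LinearMap.id (δ w)) =
      TensorProduct.map (LinearMap.mulLeft K x) LinearMap.id
      (TensorProduct.map LinearMap.id (LinearMap.mulRight K y) (δ w)) := by
    induction δ w using TensorProduct.induction_on with
    | zero => simp
    | tmul a b => simp
    | add s t hs ht => simp [map_add, hs, ht]
  rw [magmaAssociator, map_sub, hui (x * w) y, hui x (w * y), hx, hy, h1, h2]
  simp only [map_add, map_zero, add_zero, zero_add, TensorProduct.map_tmul,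
    LinearMap.id_coe, id_eq, LinearMap.mulRight_apply, LinearMap.mulLeft_apply, hcomm]
  abel
end

section
/- Let A be a magmatic algebra over a field K with a reduced unital-infinitesimal coproduct δ. Define μ₂⁴(a,b,c,d) := as(a, b, c·d) − as(a,b,c)·d. For every n ≥ 4, every i with 2 ≤ i ≤ n−2, and all primitive elements x₁, …, xₙ of A, the element μᵢⁿ(x₁,…,xₙ) := μ₂⁴(x₁, ω^{n−i−1}(x₂,…,x_{n−i}), ω^{i−1}(x_{n−i+1},…,x_{n−1}), xₙ) is primitive: δ(μᵢⁿ(x₁,…,xₙ)) = 0. -/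
open TensorProduct

/-- `μ₂⁴(a,b,c,d) = as(a,b,c·d) − as(a,b,c)·d`. -/
def muTwoFour {A : Type*} [Mul A] [Sub A] (a b c d : A) : A :=
  magmaAssociator a b (c * d) - (magmaAssociator a b c) * d

/-- The heart of the matter: `μ₂⁴(a,b,c,d)` is primitive as soon as `a` and `d`
are primitive, for arbitrary `b` and `c`. -/
lemma muTwoFour_primitive (K : Type*) [Field K] (A : Type*) [NonUnitalNonAssocRing A]
    [Module K A] [SMulCommClass K A A] [IsScalarTower K A A]
    (δ : A →ₗ[K] A ⊗[K] A) (hui : IsUICoproduct K A δ)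
    (a b c d : A) (ha : δ a = 0) (hd : δ d = 0) :
    δ (muTwoFour a b c d) = 0 := by
  rw [IsUICoproduct] at hui
  simp only [muTwoFour, magmaAssociator, map_sub, hui, ha, hd, map_zero, zero_add, add_zero,
    map_add, ← LinearMap.comp_apply, ← LinearMap.comp_assoc, ← TensorProduct.map_comp,
    TensorProduct.add_tmul, TensorProduct.smul_tmul',
    LinearMap.id_comp, LinearMap.comp_id, TensorProduct.map_tmul,
    LinearMap.id_coe, id_eq, LinearMap.mulLeft_apply, LinearMap.mulRight_apply]
  simp only [TensorProduct.sub_tmul, TensorProduct.add_tmul]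
  abel

/-- For `n ≥ 4`, `2 ≤ i ≤ n-2` and primitive `x₁,…,xₙ`, the element
`μᵢⁿ(x₁,…,xₙ) = μ₂⁴(x₁, ω^{n-i-1}(x₂,…,x_{n-i}), ω^{i-1}(x_{n-i+1},…,x_{n-1}), xₙ)`
is primitive.  Here `x₁ = x`, `xₙ = y`, `l₁` is the list `x₂,…,x_{n-i}` of length
`n-i-1` and `l₂` is the list `x_{n-i+1},…,x_{n-1}` of length `i-1`. -/
theorem ui_coproduct_mu_i_primitive
    (K : Type*) [Field K] (A : Type*) [NonUnitalNonAssocRing A]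
    [Module K A] [SMulCommClass K A A] [IsScalarTower K A A]
    (δ : A →ₗ[K] A ⊗[K] A) (hui : IsUICoproduct K A δ)
    (n i : ℕ) (hn : 4 ≤ n) (hi2 : 2 ≤ i) (hin : i ≤ n - 2)
    (x y : A) (l₁ l₂ : List A) (hl₁ : l₁.length = n - i - 1) (hl₂ : l₂.length = i - 1)
    (hx : δ x = 0) (hy : δ y = 0)
    (hprim₁ : ∀ a ∈ l₁, δ a = 0) (hprim₂ : ∀ a ∈ l₂, δ a = 0) :
    δ (muTwoFour x (leftComb l₁) (leftComb l₂) y) = 0 :=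
  muTwoFour_primitive K A δ hui x (leftComb l₁) (leftComb l₂) y hx hy
end

section
/- Let A be a magmatic algebra over a field K with a reduced unital-infinitesimal coproduct δ. If x₁, …, xₙ (n ≥ 2) are primitive elements of A, then δ(ρⁿ(x₁,…,xₙ)) = Σ_{i=1}^{n−1} ρⁱ(x₁,…,xᵢ) ⊗ ρ^{n−i}(x_{i+1},…,xₙ). -/
open TensorProduct

/-- The right comb `ρⁿ(x₁,…,xₙ) = x₁·(x₂·( ⋯ ·xₙ))`, given on the (nonempty) list
of its arguments (junk value `0` on the empty list). -/
def rightComb {A : Type*} [Mul A] [Zero A] : List A → A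
  | [] => 0
  | [x] => x
  | x :: y :: ys => x * rightComb (y :: ys)


theorem rightComb_cons {A : Type*} [Mul A] [Zero A] (x : A) {l : List A} (h : l ≠ []) :
    rightComb (x :: l) = x * rightComb l := by
  match l with
  | [] => exact absurd rfl h
  | y :: ys => rfl

theorem ui_coproduct_rightComb_aux
    (K : Type*) [Field K] (A : Type*) [NonUnitalNonAssocRing A]
    [Module K A] [SMulCommClass K A A] [IsScalarTower K A A]
    (δ : A →ₗ[K] A ⊗[K] A) (hui : IsUICoproduct K A δ) :
    ∀ l : List A, 2 ≤ l.length → (∀ x ∈ l, δ x = 0) →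
      δ (rightComb l) =
        ∑ i ∈ Finset.Icc 1 (l.length - 1),
          (rightComb (l.take i)) ⊗ₜ[K] (rightComb (l.drop i)) := by
  intro l
  induction l with
  | nil => intro h; simp at h
  | cons x t ih =>
    intro hlen hprim
    have hx : δ x = 0 := hprim x List.mem_cons_self
    rcases t with _ | ⟨y, _ | ⟨z, ts⟩⟩
    · simp at hlen
    · have hy : δ y = 0 := hprim y (by simp)
      have h := hui x y
      rw [hx, hy] at h
      simp only [map_zero, zero_add, add_zero] at h
      show δ (x * rightComb [y]) = _
      simp [rightComb, h]
    · have ht : ∀ a ∈ y :: z :: ts, δ a = 0 := fun a ha => hprim a (List.mem_cons_of_mem _ ha)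
      have hδt := ih (by simp) ht
      rw [rightComb_cons x (by simp), hui, hx, hδt]
      simp only [map_zero, zero_add, map_sum, TensorProduct.map_tmul,
        LinearMap.mulLeft_apply, LinearMap.id_coe, id_eq]
      have hIcc : ∀ k : ℕ, Finset.Icc 1 k = Finset.Ico 1 (k + 1) := fun k => by
        rw [Finset.Ico_add_one_right_eq_Icc]
      rw [hIcc, hIcc, Finset.sum_Ico_eq_sum_range, Finset.sum_Ico_eq_sum_range]
      simp only [List.length_cons]
      have hlen' : ts.length + 1 + 1 - 1 + 1 - 1 = ts.length + 1 := by omega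
      have hlen'' : ts.length + 1 + 1 + 1 - 1 + 1 - 1 = ts.length + 1 + 1 := by omega
      rw [hlen', hlen'']
      conv_rhs => rw [Finset.sum_range_succ']
      congr 1
      · refine Finset.sum_congr rfl fun i hi => ?_
        have h1 : 1 + (i + 1) = (1 + i) + 1 := by omega
        rw [h1, List.take_succ_cons, List.drop_succ_cons,
          rightComb_cons x (by simp [Nat.add_comm 1 i])]

/-- The coproduct of a right comb of primitive elements. -/
theorem ui_coproduct_rightComb_of_primitives
    (K : Type*) [Field K] (A : Type*) [NonUnitalNonAssocRing A]
    [Module K A] [SMulCommClass K A A] [IsScalarTower K A A]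
    (δ : A →ₗ[K] A ⊗[K] A) (hui : IsUICoproduct K A δ)
    (n : ℕ) (hn : 2 ≤ n) (l : List A) (hl : l.length = n)
    (hprim : ∀ x ∈ l, δ x = 0) :
    δ (rightComb l) =
      ∑ i ∈ Finset.Icc 1 (n - 1),
        (rightComb (l.take i)) ⊗ₜ[K] (rightComb (l.drop i)) := by
  subst hl
  exact ui_coproduct_rightComb_aux K A δ hui l hn hprim
end

section
/- Let F ∈ ℚ⟦X⟧ be the unique formal power series with constant coefficient 0 satisfying F − F³·((1−F)⁻¹)² = X, and let C = Σ_{n≥1} catalan(n−1)·Xⁿ ∈ ℚ⟦X⟧ be the Catalan generating series. Then C·(1−F) = F, equivalently C = F·((1−F)⁻¹). -/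
open PowerSeries

/-- The generating series `C = Σ_{n≥1} catalan(n-1)·Xⁿ` of the Catalan numbers
(shifted by one), i.e. the Poincaré series of the magmatic operad. -/
noncomputable def catalanSeries : PowerSeries ℚ :=
  PowerSeries.mk fun n => if n = 0 then 0 else (catalan (n - 1) : ℚ)

lemma catalanSeries_eq : _root_.catalanSeries = PowerSeries.X + _root_.catalanSeries ^ 2 := by
  ext n
  rw [map_add, sq, PowerSeries.coeff_mul]
  match n with
  | 0 => simp [_root_.catalanSeries]
  | 1 => simp [_root_.catalanSeries, Finset.Nat.sum_antidiagonal_eq_sum_range_succ_mk,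
      Finset.sum_range_succ]
  | (k+2) =>
    rw [Finset.Nat.sum_antidiagonal_eq_sum_range_succ_mk]
    rw [Finset.sum_range_succ', Finset.sum_range_succ]
    simp only [_root_.catalanSeries, PowerSeries.coeff_mk]
    have h1 : ∀ i ∈ Finset.range (k+1),
        (if i + 1 = 0 then (0:ℚ) else (catalan (i + 1 - 1) : ℚ)) *
          (if k + 2 - (i + 1) = 0 then (0:ℚ) else (catalan (k + 2 - (i + 1) - 1) : ℚ))
        = (catalan i : ℚ) * (catalan (k - i) : ℚ) := by
      intro i hi
      rw [Finset.mem_range] at hi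
      have h2 : k + 2 - (i+1) = (k - i) + 1 := by omega
      simp [h2]
    rw [Finset.sum_congr rfl h1]
    have h3 : (catalan (k+1) : ℚ) = ∑ i ∈ Finset.range (k+1), (catalan i : ℚ) * (catalan (k - i) : ℚ) := by
      rw [catalan_succ]
      push_cast
      rw [Finset.sum_range]
    simp [PowerSeries.coeff_X, h3]

/-- If `F` is the (unique) power series with zero constant coefficient satisfying
`F - F³·((1-F)⁻¹)² = X` (the Fine series), then the Catalan series `C` satisfies
`C·(1-F) = F`, i.e. `C = F·(1-F)⁻¹`; this is the generating-series form of the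
isomorphism `Mag = As ∘ MagFine`. -/
theorem catalanSeries_eq_fine_div_one_sub_fine
    (F : PowerSeries ℚ) (hF0 : PowerSeries.constantCoeff F = 0)
    (hF : F - F ^ 3 * ((1 - F)⁻¹) ^ 2 = PowerSeries.X) :
    _root_.catalanSeries * (1 - F) = F := by
  set C := _root_.catalanSeries with hCdef
  set u := (1 - F)⁻¹ with hudef
  have hne : PowerSeries.constantCoeff (1 - F) ≠ 0 := by
    simp [hF0]
  have hu : (1 - F) * u = 1 := PowerSeries.mul_inv_cancel _ hne
  have hX : C - C ^ 2 = F - F ^ 3 * u ^ 2 := by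
    have hCe : C = PowerSeries.X + C ^ 2 := catalanSeries_eq
    rw [hF]
    linear_combination hCe
  have h1 : (C - F * u) * (1 - F) = C - F - C * F := by
    linear_combination (-F) * hu
  have h2 : C - F * u = (C - F - C * F) * u := by
    linear_combination u * h1 - (C - F * u) * hu
  have h3 : (C - F - C * F) * (1 - C) = F * (C + F * u) * (C - F * u) := by
    linear_combination hX
  have h4 : (C - F - C * F) * (1 - C - F * u * (C + F * u)) = 0 := by
    linear_combination h3 + F * (C + F * u) * h2
  have hC0 : PowerSeries.constantCoeff C = 0 := by
    simp [hCdef, _root_.catalanSeries, PowerSeries.constantCoeff_mk]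
  have hVne : (1 - C - F * u * (C + F * u)) ≠ 0 := by
    intro h
    have : PowerSeries.constantCoeff (1 - C - F * u * (C + F * u)) = 0 := by
      rw [h]; simp
    simp [hC0, hF0] at this
  have hD : C - F - C * F = 0 := by
    rcases mul_eq_zero.mp h4 with h | h
    · exact h
    · exact absurd h hVne
  linear_combination hD
end
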